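/- For every graph G, there exists a linked ordering σ of V(G) with cw_σ(G) = cw(G). -/

import Mathlib

/-!
Among the orderings of optimum width choose one minimising `∑_v δ(V_v^σ)`. If it were not
linked at `u ≤ u'`, then by Menger's theorem some set `S` with `V_u ⊆ S ⊆ V_{u'}` would have
`δ(S)` smaller than every `δ(V_v)`, `u ≤ v ≤ u'`; take such an `S` with `δ(S)` minimum. Listing
`S` first and then the remaining vertices, both in the old order, replaces each prefix `P` by
`S ∩ P` or `S ∪ P`, which by submodularity of `δ` and the choice of `S` does not increase the
cut, and the prefix ending at the last vertex of `S` becomes `S` itself. The new ordering is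
still optimal and has a smaller sum, a contradiction.

Menger's theorem for edge-disjoint paths is proved with unit flows: augment along residual
paths until the residually reachable set is a cut, then peel off one flow path at a time.
-/

/-- A finite undirected multigraph without loops. -/
structure Multigraph where
  V : Type
  E : Type
  finV : Finite V
  finE : Finite E
  ends : E → V × V
  loopless : ∀ e, (ends e).1 ≠ (ends e).2

attribute [instance] Multigraph.finV Multigraph.finE

namespace Multigraph

/-- `δ_G(S)`: the number of edges of `G` with exactly one endpoint in `S`. -/
noncomputable def delta (G : Multigraph) (S : Set G.V) : ℕ :=
  {e : G.E | ¬ ((G.ends e).1 ∈ S ↔ (G.ends e).2 ∈ S)}.ncard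

/-- The width `cw_σ(G)` of an ordering, represented as an injective ranking `ρ : V → ℕ`. -/
noncomputable def cwOrd (G : Multigraph) (ρ : G.V → ℕ) : ℕ :=
  sSup {w | ∃ v : G.V, w = G.delta {u | ρ u ≤ ρ v}}

/-- The cutwidth of a multigraph. -/
noncomputable def cutwidth (G : Multigraph) : ℕ :=
  sInf {w | ∃ ρ : G.V → ℕ, Function.Injective ρ ∧ G.cwOrd ρ = w}

/-- Walks in a multigraph. -/
inductive Walk (G : Multigraph) : G.V → G.V → Type
  | nil (v : G.V) : Walk G v v
  | cons {u v w : G.V} (e : G.E)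
      (h : G.ends e = (u, v) ∨ G.ends e = (v, u)) (p : Walk G v w) : Walk G u w

namespace Walk

def edges {G : Multigraph} : ∀ {u v : G.V}, G.Walk u v → List G.E
  | _, _, .nil _ => []
  | _, _, .cons e _ p => e :: p.edges

def support {G : Multigraph} : ∀ {u v : G.V}, G.Walk u v → List G.V
  | _, _, .nil v => [v]
  | u, _, .cons _ _ p => u :: p.support

end Walk

def Connected (G : Multigraph) : Prop := ∀ u v : G.V, Nonempty (G.Walk u v)

/-- An immersion model of `H` in `G`. -/
structure ImmersionModel (H G : Multigraph) where
  vmap : H.V → G.V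
  inj : Function.Injective vmap
  emap : (e : H.E) → G.Walk (vmap (H.ends e).1) (vmap (H.ends e).2)
  isPath : ∀ e, ((emap e).support).Nodup
  edgeDisj : ∀ e e', e ≠ e' → ∀ f, f ∈ (emap e).edges → f ∉ (emap e').edges

/-- `H ≤_i G`. -/
def Immersion (H G : Multigraph) : Prop := Nonempty (ImmersionModel H G)

/-- A strong immersion model: no internal vertex of a path is a branch vertex. -/
structure StrongImmersionModel (H G : Multigraph) extends ImmersionModel H G where
  strong : ∀ e, ∀ x, x ∈ (emap e).support →
    x ≠ vmap (H.ends e).1 → x ≠ vmap (H.ends e).2 → x ∉ Set.range vmap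

/-- `H ≤_si G`. -/
def StrongImmersion (H G : Multigraph) : Prop := Nonempty (StrongImmersionModel H G)

/-- Isomorphism of multigraphs. -/
structure Iso (G H : Multigraph) where
  fv : G.V ≃ H.V
  fe : G.E ≃ H.E
  pres : ∀ e, H.ends (fe e) = (fv (G.ends e).1, fv (G.ends e).2)
           ∨ H.ends (fe e) = (fv (G.ends e).2, fv (G.ends e).1)

def Isomorphic (G H : Multigraph) : Prop := Nonempty (Iso G H)

/-- The minimal obstruction set of a class `C` with respect to a partial order `le`. -/
def obstructions (le : Multigraph → Multigraph → Prop) (C : Set Multigraph) :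
    Set Multigraph :=
  {G | G ∉ C ∧ ∀ G', le G' G → ¬ G'.Isomorphic G → G' ∈ C}

/-- `C_k`: the class of multigraphs of cutwidth at most `k`. -/
def cutwidthClass (k : ℕ) : Set Multigraph := {G | G.cutwidth ≤ k}

/-- The degree of a vertex (each parallel edge counts once at each endpoint). -/
noncomputable def degree (G : Multigraph) (v : G.V) : ℕ :=
  {e : G.E | (G.ends e).1 = v ∨ (G.ends e).2 = v}.ncard

/-- The number of `A`-blocks of an ordering `ρ`: the number of maximal runs of
consecutive (in `ρ`) vertices belonging to `A`, counted via block-starting vertices. -/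
noncomputable def blockCount (G : Multigraph) (ρ : G.V → ℕ) (A : Set G.V) : ℕ :=
  {v : G.V | v ∈ A ∧ ∀ u : G.V, ρ u < ρ v →
      ∃ w : G.V, w ∉ A ∧ ρ u ≤ ρ w ∧ ρ w < ρ v}.ncard

/-- The extension `G*` of a `k`-boundaried graph `(G, x)`. -/
def extension (G : Multigraph) {k : ℕ} (x : Fin k → G.V) : Multigraph where
  V := G.V ⊕ Fin k
  E := G.E ⊕ Fin k
  finV := inferInstance
  finE := inferInstance
  ends := Sum.elim (fun e => (Sum.inl (G.ends e).1, Sum.inl (G.ends e).2))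
                   (fun i => (Sum.inl (x i), Sum.inr i))
  loopless := by
    rintro (e | i)
    · simpa using G.loopless e
    · simp

/-- The join `𝐀 ⊕ 𝐁` of two `k`-boundaried graphs. -/
def join {k : ℕ} (A B : Multigraph) (x : Fin k → A.V) (y : Fin k → B.V) : Multigraph where
  V := A.V ⊕ B.V
  E := (A.E ⊕ B.E) ⊕ Fin k
  finV := inferInstance
  finE := inferInstance
  ends := Sum.elim
    (Sum.elim (fun e => (Sum.inl (A.ends e).1, Sum.inl (A.ends e).2))
              (fun e => (Sum.inr (B.ends e).1, Sum.inr (B.ends e).2)))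
    (fun i => (Sum.inl (x i), Sum.inr (y i)))
  loopless := by
    rintro ((e | e) | i)
    · simpa using A.loopless e
    · simpa using B.loopless e
    · simp

/-- An `ℓ`-bucketing of an ordering `ρ` (buckets indexed 1,…,ℓ). -/
def IsBucketing (G : Multigraph) (ρ : G.V → ℕ) (ℓ : ℕ) (T : G.V → ℕ) : Prop :=
  (∀ v, 1 ≤ T v ∧ T v ≤ ℓ) ∧ ∀ u v : G.V, ρ u ≤ ρ v → T u ≤ T v

/-- `width(G,σ,T,i)`: the maximum size of a cut in `cuts(G,σ,T,i)`; these cuts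
are described by their left side `S`, which contains all buckets before `i`,
a `σ`-downward-closed part of bucket `i`, and nothing else. -/
noncomputable def bucketWidth (G : Multigraph) (ρ : G.V → ℕ) (T : G.V → ℕ) (i : ℕ) : ℕ :=
  sSup {w | ∃ S : Set G.V,
    (∀ v, T v < i → v ∈ S) ∧ (∀ v ∈ S, T v ≤ i) ∧
    (∀ u v : G.V, T u = i → T v = i → ρ u ≤ ρ v → v ∈ S → u ∈ S) ∧
    w = G.delta S}

/-- A `(k,ℓ)`-bucket interface. -/
structure BucketInterface (k ℓ : ℕ) where
  b : Fin k → ℕ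
  b' : Fin k → ℕ
  mu : ℕ → ℕ
  mu' : ℕ → ℕ
  b_mem : ∀ i, b i ∈ Set.Icc 1 ℓ
  b'_mem : ∀ i, b' i ∈ Set.Icc 1 ℓ
  mu_le : ∀ j, mu j ≤ k
  mu'_le : ∀ j, mu' j ≤ k

/-- A `k`-boundaried graph `(G, x)` conforms with a `(k,ℓ)`-bucket interface. -/
def Conforms {k : ℕ} (G : Multigraph) (x : Fin k → G.V) (ℓ : ℕ)
    (I : BucketInterface k ℓ) : Prop :=
  ∃ ρ : (G.extension x).V → ℕ, Function.Injective ρ ∧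
  ∃ T : (G.extension x).V → ℕ, (G.extension x).IsBucketing ρ ℓ T ∧
    (∀ v : G.V, Odd (T (Sum.inl v))) ∧
    (∀ i : Fin k, Even (T (Sum.inr i))) ∧
    (∀ i : Fin k, T (Sum.inl (x i)) = I.b i) ∧
    (∀ i : Fin k, T (Sum.inr i) = I.b' i) ∧
    (∀ j ∈ Set.Icc 1 ℓ,
      G.bucketWidth (fun v => ρ (Sum.inl v)) (fun v => T (Sum.inl v)) j ≤ I.mu j) ∧
    (∀ j ∈ Set.Icc 1 ℓ, (G.extension x).bucketWidth ρ T j ≤ I.mu' j)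

/-- `m` pairwise edge-disjoint paths between the sets `X` and `Y`. -/
def ConnectorBetween (G : Multigraph) (X Y : Set G.V) (m : ℕ) : Prop :=
  ∃ (s t : Fin m → G.V) (P : (i : Fin m) → G.Walk (s i) (t i)),
    (∀ i, s i ∈ X) ∧ (∀ i, t i ∈ Y) ∧ (∀ i, (P i).support.Nodup) ∧
    ∀ i j, i ≠ j → ∀ f, f ∈ (P i).edges → f ∉ (P j).edges

/-- A linked ordering. -/
def Linked (G : Multigraph) (ρ : G.V → ℕ) : Prop :=
  ∀ u u' : G.V, ρ u ≤ ρ u' →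
    G.ConnectorBetween {z | ρ z ≤ ρ u} {z | ¬ ρ z ≤ ρ u'}
      (sInf {w | ∃ v : G.V, ρ u ≤ ρ v ∧ ρ v ≤ ρ u' ∧ w = G.delta {z | ρ z ≤ ρ v}})

/-- The multigraph obtained by deleting a set of edges. -/
def deleteEdges (G : Multigraph) (F : Set G.E) : Multigraph where
  V := G.V
  E := {e : G.E // e ∉ F}
  finV := G.finV
  finE := inferInstance
  ends e := G.ends e.1
  loopless e := G.loopless e.1

/-- `dcw_k(G)`: minimum number of edges to delete to reach cutwidth at most `k`. -/
noncomputable def dcw (k : ℕ) (G : Multigraph) : ℕ :=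
  sInf {w | ∃ F : Set G.E, (G.deleteEdges F).cutwidth ≤ k ∧ F.ncard = w}

/-- The class `C_{w,k}`. -/
def dcwClass (w k : ℕ) : Set Multigraph := {G | dcw k G ≤ w}

/-- Induced subgraph `G[X]`. -/
def induce (G : Multigraph) (X : Set G.V) : Multigraph where
  V := X
  E := {e : G.E // (G.ends e).1 ∈ X ∧ (G.ends e).2 ∈ X}
  finV := inferInstance
  finE := inferInstance
  ends e := (⟨(G.ends e.1).1, e.2.1⟩, ⟨(G.ends e.1).2, e.2.2⟩)
  loopless := by
    intro e h
    exact G.loopless e.1 (Subtype.ext_iff.mp h)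

/-- A graph is `ℋ`-immersion-free if it contains no member of `ℋ` as an immersion. -/
def ImmersionFree (H : Set Multigraph) (G : Multigraph) : Prop :=
  ∀ X ∈ H, ¬ Immersion X G

/-- `aic_ℋ(G)`: minimum number of edge deletions to reach an `ℋ`-immersion-free graph. -/
noncomputable def aic (H : Set Multigraph) (G : Multigraph) : ℕ :=
  sInf {w | ∃ F : Set G.E, ImmersionFree H (G.deleteEdges F) ∧ F.ncard = w}

/-- The class `C_{w,ℋ}`. -/
def aicClass (w : ℕ) (H : Set Multigraph) : Set Multigraph := {G | aic H G ≤ w}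

/-- `ℋ` is a `≤_i`-antichain. -/
def IsAntichainImm (H : Set Multigraph) : Prop :=
  ∀ G₁ ∈ H, ∀ G₂ ∈ H, Immersion G₁ G₂ → Isomorphic G₁ G₂

/-- Disjoint union of two multigraphs. -/
def disjUnion (G H : Multigraph) : Multigraph where
  V := G.V ⊕ H.V
  E := G.E ⊕ H.E
  finV := inferInstance
  finE := inferInstance
  ends := Sum.elim (fun e => (Sum.inl (G.ends e).1, Sum.inl (G.ends e).2))
                   (fun e => (Sum.inr (H.ends e).1, Sum.inr (H.ends e).2))
  loopless := by
    rintro (e | e)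
    · simpa using G.loopless e
    · simpa using H.loopless e

/-- Disjoint union of a finite family of multigraphs. -/
def sigmaUnion {m : ℕ} (Gs : Fin m → Multigraph) : Multigraph where
  V := Σ i, (Gs i).V
  E := Σ i, (Gs i).E
  finV := inferInstance
  finE := inferInstance
  ends e := (⟨e.1, ((Gs e.1).ends e.2).1⟩, ⟨e.1, ((Gs e.1).ends e.2).2⟩)
  loopless := by
    intro e h
    exact (Gs e.1).loopless e.2 (by simpa using h)

/-- `cw_σ(G,X) = δ_G(X) + cw_{σ_X}(G[X])`. -/
noncomputable def cwRel (G : Multigraph) (ρ : G.V → ℕ) (X : Set G.V) : ℕ :=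
  G.delta X + (G.induce X).cwOrd (fun v => ρ v.val)

/-- Membership in the family of prefixes relevant to `X`-linkedness: the complement
of `X` (the prefix right before `X` starts) and the prefixes ending inside `X`. -/
def IsXPrefix (G : Multigraph) (ρ : G.V → ℕ) (X : Set G.V) (P : Set G.V) : Prop :=
  P = Xᶜ ∨ ∃ v ∈ X, P = {z | ρ z ≤ ρ v}

/-- An `X`-linked ordering. -/
def XLinked (G : Multigraph) (ρ : G.V → ℕ) (X : Set G.V) : Prop :=
  (∀ u v : G.V, u ∉ X → v ∈ X → ρ u < ρ v) ∧
  ∀ P P' : Set G.V, G.IsXPrefix ρ X P → G.IsXPrefix ρ X P' → P ⊆ P' →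
    G.ConnectorBetween P P'ᶜ
      (sInf {w | ∃ Q : Set G.V, G.IsXPrefix ρ X Q ∧ P ⊆ Q ∧ Q ⊆ P' ∧ w = G.delta Q})

end Multigraph

namespace Multigraph

open Finset

noncomputable instance (G : Multigraph) : Fintype G.V := Fintype.ofFinite _
noncomputable instance (G : Multigraph) : Fintype G.E := Fintype.ofFinite _

open scoped Classical

variable {G : Multigraph}

lemma delta_eq_card (S : Set G.V) :
    G.delta S = #{e | ¬ ((G.ends e).1 ∈ S ↔ (G.ends e).2 ∈ S)} := by
  rw [delta, ← Set.ncard_coe_finset]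
  congr 1
  ext e
  simp

lemma delta_inter_add_delta_union_le (A B : Set G.V) :
    G.delta (A ∩ B) + G.delta (A ∪ B) ≤ G.delta A + G.delta B := by
  simp only [delta_eq_card, card_filter, ← sum_add_distrib]
  refine sum_le_sum fun e _ => ?_
  by_cases h1 : (G.ends e).1 ∈ A <;> by_cases h2 : (G.ends e).2 ∈ A <;>
    by_cases h3 : (G.ends e).1 ∈ B <;> by_cases h4 : (G.ends e).2 ∈ B <;>
    simp [h1, h2, h3, h4]

def IsLink (G : Multigraph) (e : G.E) (u v : G.V) : Prop :=
  G.ends e = (u, v) ∨ G.ends e = (v, u)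

lemma IsLink.ne {e : G.E} {u v : G.V} (h : G.IsLink e u v) : u ≠ v := by
  rintro rfl
  exact G.loopless e (by rcases h with h | h <;> rw [h])

namespace Walk

variable {P : G.E → G.V → Prop}

def AllSteps (P : G.E → G.V → Prop) : ∀ {u v : G.V}, G.Walk u v → Prop
  | _, _, .nil _ => True
  | u, _, .cons e _ p => P e u ∧ p.AllSteps P

lemma start_mem_support {a b : G.V} (w : G.Walk a b) : a ∈ w.support := by
  cases w <;> simp [support]

lemma exists_suffix {a b : G.V} (w : G.Walk a b) (hw : w.AllSteps P) {u : G.V}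
    (hu : u ∈ w.support) :
    ∃ w' : G.Walk u b, w'.support.Sublist w.support ∧ w'.AllSteps P := by
  induction w with
  | nil v =>
    obtain rfl : u = v := by simpa [support] using hu
    exact ⟨.nil u, .refl _, trivial⟩
  | cons e h p ih =>
    rcases List.mem_cons.mp hu with rfl | hu
    · exact ⟨.cons e h p, .refl _, hw⟩
    · obtain ⟨w', hsub, hw'⟩ := ih hw.2 hu
      exact ⟨w', hsub.cons _, hw'⟩

lemma exists_path {a b : G.V} (w : G.Walk a b) (hw : w.AllSteps P) :
    ∃ p : G.Walk a b, p.support.Nodup ∧ p.AllSteps P := by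
  induction w with
  | nil v => exact ⟨.nil v, by simp [support], trivial⟩
  | @cons u v _ e h q ih =>
    obtain ⟨p, hnd, hp⟩ := ih hw.2
    by_cases hu : u ∈ p.support
    · obtain ⟨p', hsub, hp'⟩ := p.exists_suffix hp hu
      exact ⟨p', hsub.nodup hnd, hp'⟩
    · exact ⟨.cons e h p, List.nodup_cons.mpr ⟨hu, hnd⟩, hw.1, hp⟩

lemma ends_mem_support {a b : G.V} (w : G.Walk a b) {e : G.E} (he : e ∈ w.edges) :
    (G.ends e).1 ∈ w.support ∧ (G.ends e).2 ∈ w.support := by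
  induction w with
  | nil v => simp [edges] at he
  | cons e' h p ih =>
    rcases List.mem_cons.mp he with rfl | he
    · have hv := p.start_mem_support
      rcases h with h | h <;> simp [support, h, hv]
    · exact (ih he).imp (List.mem_cons_of_mem _) (List.mem_cons_of_mem _)

lemma edges_nodup_of_support_nodup {a b : G.V} (w : G.Walk a b) (hw : w.support.Nodup) :
    w.edges.Nodup := by
  induction w with
  | nil v => simp [edges]
  | @cons u v _ e h p ih =>
    rw [support, List.nodup_cons] at hw
    refine List.nodup_cons.mpr ⟨fun he => hw.1 ?_, ih hw.2⟩
    have hends := p.ends_mem_support he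
    rcases h with h | h <;> simp only [h] at hends
    exacts [hends.1, hends.2]

end Walk

/-! Unit flows are integer edge functions with values in `{-1, 0, 1}`; the sign records the
direction in which the edge is used, relative to the orientation `(G.ends e).1 → (G.ends e).2`. -/

noncomputable def incidence (G : Multigraph) (e : G.E) (v : G.V) : ℤ :=
  (if (G.ends e).1 = v then 1 else 0) - (if (G.ends e).2 = v then 1 else 0)

lemma IsLink.incidence_mul_incidence {e : G.E} {u w : G.V} (h : G.IsLink e u w) (v : G.V) :
    G.incidence e u * G.incidence e v = (if v = u then 1 else 0) - (if v = w then 1 else 0) := by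
  have huw := h.ne
  by_cases hvu : v = u
  · subst hvu
    rcases h with h | h <;> simp [incidence, h, huw, huw.symm]
  by_cases hvw : v = w
  · subst hvw
    rcases h with h | h <;> simp [incidence, h, huw, huw.symm]
  rcases h with h | h <;> simp [incidence, h, hvu, hvw, Ne.symm hvu, Ne.symm hvw]

lemma IsLink.incidence_eq_one_or {e : G.E} {u v : G.V} (h : G.IsLink e u v) :
    G.incidence e u = 1 ∨ G.incidence e u = -1 := by
  have huv := h.ne
  rcases h with h | h <;> simp [incidence, h, huv.symm]

noncomputable def netOut (G : Multigraph) (f : G.E → ℤ) (v : G.V) : ℤ :=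
  ∑ e, f e * G.incidence e v

lemma netOut_zero (v : G.V) : G.netOut 0 v = 0 := by
  simp [netOut]

lemma netOut_add (f g : G.E → ℤ) (v : G.V) :
    G.netOut (f + g) v = G.netOut f v + G.netOut g v := by
  simp only [netOut, Pi.add_apply, add_mul, sum_add_distrib]

lemma netOut_single (e : G.E) (c : ℤ) (v : G.V) :
    G.netOut (Pi.single e c) v = c * G.incidence e v := by
  simp [netOut, Pi.single_apply]

noncomputable def Walk.flow : ∀ {u v : G.V}, G.Walk u v → G.E → ℤ
  | _, _, .nil _ => 0
  | u, _, .cons e _ p => Pi.single e (G.incidence e u) + p.flow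

namespace Walk

lemma netOut_flow {a b : G.V} (p : G.Walk a b) (v : G.V) :
    G.netOut p.flow v = (if v = a then 1 else 0) - (if v = b then 1 else 0) := by
  induction p with
  | nil u => simp [flow, netOut_zero]
  | cons e h p ih =>
    rw [flow, netOut_add, netOut_single, ih, IsLink.incidence_mul_incidence h]
    ring

lemma flow_apply_of_notMem {a b : G.V} (p : G.Walk a b) {e : G.E} (he : e ∉ p.edges) :
    p.flow e = 0 := by
  induction p with
  | nil u => rfl
  | cons e' h p ih =>
    simp only [edges, List.mem_cons, not_or] at he
    simp [flow, he.1, ih he.2]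

lemma exists_flow_apply {a b : G.V} (p : G.Walk a b) (hp : p.AllSteps P)
    (hnd : p.edges.Nodup) {e : G.E} (he : e ∈ p.edges) :
    ∃ u v, G.IsLink e u v ∧ P e u ∧ p.flow e = G.incidence e u := by
  induction p with
  | nil u => simp [edges] at he
  | @cons u v _ e' h p ih =>
    rw [edges, List.nodup_cons] at hnd
    by_cases hee : e = e'
    · subst hee
      exact ⟨u, v, h, hp.1, by simp [flow, p.flow_apply_of_notMem hnd.1]⟩
    · obtain ⟨x, y, hxy, hPx, hfl⟩ := ih hp.2 hnd.2 (List.mem_of_ne_of_mem hee he)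
      exact ⟨x, y, hxy, hPx, by simp [flow, hee, hfl]⟩

lemma sub_flow_apply_of_mem {a b : G.V} {f : G.E → ℤ} (p : G.Walk a b)
    (hp : p.AllSteps fun e u => f e = G.incidence e u) (hnd : p.edges.Nodup) {e : G.E}
    (he : e ∈ p.edges) : (f - p.flow) e = 0 := by
  obtain ⟨u, v, -, hfu, hfl⟩ := p.exists_flow_apply hp hnd he
  simp [hfl, hfu]

end Walk

structure IsUnitFlow (G : Multigraph) (X Y : Set G.V) (f : G.E → ℤ) : Prop where
  abs_le_one : ∀ e, |f e| ≤ 1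
  netOut_eq_zero : ∀ v, v ∉ X → v ∉ Y → G.netOut f v = 0
  netOut_nonneg : ∀ v ∈ X, 0 ≤ G.netOut f v

noncomputable def flowValue (G : Multigraph) (f : G.E → ℤ) (X : Set G.V) : ℤ :=
  ∑ v with v ∈ X, G.netOut f v

noncomputable def crossSign (G : Multigraph) (S : Set G.V) (e : G.E) : ℤ :=
  (if (G.ends e).1 ∈ S then 1 else 0) - (if (G.ends e).2 ∈ S then 1 else 0)

lemma sum_netOut_eq (f : G.E → ℤ) (S : Set G.V) :
    ∑ v with v ∈ S, G.netOut f v = ∑ e, f e * G.crossSign S e := by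
  simp only [netOut]
  rw [sum_comm]
  refine sum_congr rfl fun e _ => ?_
  simp [← mul_sum, incidence, crossSign, sum_sub_distrib, sum_ite_eq]

lemma IsUnitFlow.flowValue_eq {X Y S : Set G.V} {f : G.E → ℤ} (hf : G.IsUnitFlow X Y f)
    (hXS : X ⊆ S) (hSY : Disjoint S Y) :
    G.flowValue f X = ∑ e, f e * G.crossSign S e := by
  rw [← sum_netOut_eq, flowValue]
  refine sum_subset (fun v => by simpa using @hXS v) fun v hvS hvX => ?_
  simp only [mem_filter, mem_univ, true_and] at hvS hvX
  exact hf.netOut_eq_zero v hvX (Set.disjoint_left.mp hSY hvS)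

lemma flowValue_add_flow {X : Set G.V} (f : G.E → ℤ) {x y : G.V} (p : G.Walk x y)
    (hx : x ∈ X) (hy : y ∉ X) : G.flowValue (f + p.flow) X = G.flowValue f X + 1 := by
  simp only [flowValue, netOut_add, p.netOut_flow, sum_add_distrib, sum_sub_distrib,
    sum_ite_eq']
  simp [hx, hy]

/-- Where no residual capacity leaves `S`, every edge of `δ(S)` carries one unit out of `S`. -/
lemma sum_mul_crossSign_eq_delta {f : G.E → ℤ} {S : Set G.V}
    (hS : ∀ e u v, G.IsLink e u v → u ∈ S → f e ≠ G.incidence e u → v ∈ S) :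
    ∑ e, f e * G.crossSign S e = G.delta S := by
  rw [delta_eq_card, card_filter, Nat.cast_sum]
  refine sum_congr rfl fun e _ => ?_
  have hne := G.loopless e
  by_cases h1 : (G.ends e).1 ∈ S <;> by_cases h2 : (G.ends e).2 ∈ S
  · simp [crossSign, h1, h2]
  · have hfe : f e = G.incidence e (G.ends e).1 := by_contra fun h => h2 (hS e _ _ (.inl rfl) h1 h)
    simp [crossSign, h1, h2, hfe, incidence, hne.symm]
  · have hfe : f e = G.incidence e (G.ends e).2 := by_contra fun h => h1 (hS e _ _ (.inr rfl) h2 h)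
    simp [crossSign, h1, h2, hfe, incidence, hne]
  · simp [crossSign, h1, h2]

lemma sum_mul_crossSign_nonpos {f : G.E → ℤ} {S : Set G.V} (hf : ∀ e, |f e| ≤ 1)
    (hS : ∀ e u v, G.IsLink e u v → u ∈ S → f e = G.incidence e u → v ∈ S) :
    ∑ e, f e * G.crossSign S e ≤ 0 := by
  refine sum_nonpos fun e _ => ?_
  have hne := G.loopless e
  have hfe := abs_le.mp (hf e)
  by_cases h1 : (G.ends e).1 ∈ S <;> by_cases h2 : (G.ends e).2 ∈ S
  · simp [crossSign, h1, h2]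
  · have hfe' : f e ≠ G.incidence e (G.ends e).1 := fun h => h2 (hS e _ _ (.inl rfl) h1 h)
    simp [crossSign, incidence, h1, h2, hne.symm] at hfe' ⊢
    omega
  · have hfe' : f e ≠ G.incidence e (G.ends e).2 := fun h => h1 (hS e _ _ (.inr rfl) h2 h)
    simp [crossSign, incidence, h1, h2, hne] at hfe' ⊢
    omega
  · simp [crossSign, h1, h2]

lemma exists_path_or_closed (P : G.E → G.V → Prop) (A B : Set G.V) :
    (∃ a ∈ A, ∃ b ∈ B, ∃ p : G.Walk a b, p.support.Nodup ∧ p.AllSteps P) ∨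
    ∃ S, A ⊆ S ∧ Disjoint S B ∧
      ∀ e u v, G.IsLink e u v → u ∈ S → P e u → v ∈ S := by
  by_cases h : ∃ a ∈ A, ∃ b ∈ B, ∃ w : G.Walk a b, w.AllSteps P
  · obtain ⟨a, ha, b, hb, w, hw⟩ := h
    exact .inl ⟨a, ha, b, hb, w.exists_path hw⟩
  refine .inr ⟨{v | ¬ ∃ b ∈ B, ∃ w : G.Walk v b, w.AllSteps P},
    fun a ha hab => h ⟨a, ha, hab⟩,
    Set.disjoint_left.mpr fun b hb hbB => hb ⟨b, hbB, .nil b, trivial⟩,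
    fun e u v huv hu hP hv => ?_⟩
  obtain ⟨b, hb, w, hw⟩ := hv
  exact hu ⟨b, hb, .cons e huv w, hP, hw⟩

section Flows

variable {X Y : Set G.V}

lemma IsUnitFlow.add_flow {f : G.E → ℤ} (hf : G.IsUnitFlow X Y f) (hXY : Disjoint X Y)
    {x y : G.V} (hx : x ∈ X) (hy : y ∈ Y) (p : G.Walk x y) (hp : p.support.Nodup)
    (hres : p.AllSteps fun e u => f e ≠ G.incidence e u) :
    G.IsUnitFlow X Y (f + p.flow) where
  abs_le_one e := by
    by_cases he : e ∈ p.edges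
    · obtain ⟨u, v, huv, hfu, hfl⟩ :=
        p.exists_flow_apply hres (p.edges_nodup_of_support_nodup hp) he
      have := abs_le.mp (hf.abs_le_one e)
      rw [Pi.add_apply, hfl]
      rcases huv.incidence_eq_one_or with h | h <;> rw [h] at hfu ⊢ <;> rw [abs_le] <;> omega
    · simpa [p.flow_apply_of_notMem he] using hf.abs_le_one e
  netOut_eq_zero v hvX hvY := by
    rw [netOut_add, p.netOut_flow, hf.netOut_eq_zero v hvX hvY,
      if_neg (ne_of_mem_of_not_mem hx hvX).symm, if_neg (ne_of_mem_of_not_mem hy hvY).symm]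
    simp
  netOut_nonneg v hvX := by
    rw [netOut_add, p.netOut_flow,
      if_neg (ne_of_mem_of_not_mem hvX (Set.disjoint_right.mp hXY hy))]
    have := hf.netOut_nonneg v hvX
    split_ifs <;> omega

lemma IsUnitFlow.sub_flow {f : G.E → ℤ} (hf : G.IsUnitFlow X Y f) (hXY : Disjoint X Y)
    {x y : G.V} (hx : x ∈ X) (hy : y ∈ Y) (hpos : 0 < G.netOut f x) (p : G.Walk x y)
    (hp : p.support.Nodup) (hfwd : p.AllSteps fun e u => f e = G.incidence e u) :
    G.IsUnitFlow X Y (f - p.flow) where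
  abs_le_one e := by
    by_cases he : e ∈ p.edges
    · simp [p.sub_flow_apply_of_mem hfwd (p.edges_nodup_of_support_nodup hp) he]
    · simpa [p.flow_apply_of_notMem he] using hf.abs_le_one e
  netOut_eq_zero v hvX hvY := by
    have := hf.netOut_eq_zero v hvX hvY
    rw [← sub_add_cancel f p.flow, netOut_add, p.netOut_flow,
      if_neg (ne_of_mem_of_not_mem hx hvX).symm, if_neg (ne_of_mem_of_not_mem hy hvY).symm]
      at this
    simpa using this
  netOut_nonneg v hvX := by
    have hxy : x ≠ y := ne_of_mem_of_not_mem hx (Set.disjoint_right.mp hXY hy)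
    have hvy : v ≠ y := ne_of_mem_of_not_mem hvX (Set.disjoint_right.mp hXY hy)
    have hv := hf.netOut_nonneg v hvX
    rw [← sub_add_cancel f p.flow, netOut_add, p.netOut_flow] at hv hpos
    by_cases hvx : v = x
    · subst hvx
      simp [hxy] at hpos
      omega
    · simpa [hvx, hvy] using hv

lemma exists_isUnitFlow_le_flowValue (hXY : Disjoint X Y) (m : ℕ)
    (hcut : ∀ S, X ⊆ S → Disjoint S Y → m ≤ G.delta S) :
    ∃ f, G.IsUnitFlow X Y f ∧ (m : ℤ) ≤ G.flowValue f X := by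
  induction m with
  | zero => exact ⟨0, ⟨by simp, fun v _ _ => netOut_zero v, fun v _ => (netOut_zero v).ge⟩,
      by simp [flowValue, netOut_zero]⟩
  | succ m ih =>
    obtain ⟨f, hf, hm⟩ := ih fun S hXS hSY => (hcut S hXS hSY).trans' m.le_succ
    rcases G.exists_path_or_closed (fun e u => f e ≠ G.incidence e u) X Y with
      ⟨x, hx, y, hy, p, hp, hres⟩ | ⟨S, hXS, hSY, hS⟩
    · refine ⟨f + p.flow, hf.add_flow hXY hx hy p hp hres, ?_⟩
      rw [flowValue_add_flow f p hx (Set.disjoint_right.mp hXY hy)]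
      push_cast
      omega
    · refine ⟨f, hf, ?_⟩
      rw [hf.flowValue_eq hXS hSY, sum_mul_crossSign_eq_delta hS]
      exact_mod_cast hcut S hXS hSY

lemma exists_paths_of_isUnitFlow (hXY : Disjoint X Y) (m : ℕ) :
    ∀ f, G.IsUnitFlow X Y f → (m : ℤ) ≤ G.flowValue f X →
    ∃ W : Fin m → Σ a b, G.Walk a b,
      (∀ i, (W i).1 ∈ X ∧ (W i).2.1 ∈ Y ∧ (W i).2.2.support.Nodup ∧
        ∀ e ∈ (W i).2.2.edges, f e ≠ 0) ∧
      ∀ i j, i ≠ j → ∀ e ∈ (W i).2.2.edges, e ∉ (W j).2.2.edges := by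
  induction m with
  | zero => exact fun _ _ _ => ⟨Fin.elim0, fun i => i.elim0, fun i => i.elim0⟩
  | succ m ih =>
    intro f hf hm
    obtain ⟨x, hxX, hx⟩ : ∃ x ∈ X, 0 < G.netOut f x := by
      by_contra! h
      have : G.flowValue f X ≤ 0 := sum_nonpos fun v hv => h v (by simpa using hv)
      omega
    rcases G.exists_path_or_closed (fun e u => f e = G.incidence e u) {x} Y with
      ⟨x', rfl, y, hy, p, hp, hfwd⟩ | ⟨S, hxS, hSY, hS⟩
    · have hnd := p.edges_nodup_of_support_nodup hp
      have hpe : ∀ e ∈ p.edges, (f - p.flow) e = 0 := fun e => p.sub_flow_apply_of_mem hfwd hnd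
      have hg := hf.sub_flow hXY hxX hy hx p hp hfwd
      have hgm : (m : ℤ) ≤ G.flowValue (f - p.flow) X := by
        have := flowValue_add_flow (f - p.flow) p hxX (Set.disjoint_right.mp hXY hy)
        rw [sub_add_cancel] at this
        push_cast at hm
        omega
      obtain ⟨W, hW, hdisj⟩ := ih (f - p.flow) hg hgm
      refine ⟨Fin.cons ⟨x', y, p⟩ W, fun i => ?_, fun i j hij e hei => ?_⟩
      · induction i using Fin.cases with
        | zero =>
          refine ⟨hxX, hy, hp, fun e he => ?_⟩
          obtain ⟨u, v, huv, hfu, -⟩ := p.exists_flow_apply hfwd hnd he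
          rcases huv.incidence_eq_one_or with h | h <;> simp [hfu, h]
        | succ i =>
          obtain ⟨h1, h2, h3, h4⟩ := hW i
          refine ⟨h1, h2, h3, fun e he hfe => h4 e he ?_⟩
          by_cases hep : e ∈ p.edges
          · exact hpe e hep
          · simp [hfe, p.flow_apply_of_notMem hep]
      · induction i using Fin.cases <;> induction j using Fin.cases
        · exact absurd rfl hij
        · exact fun hej => (hW _).2.2.2 e hej (hpe e hei)
        · exact fun hej => (hW _).2.2.2 e hei (hpe e hej)
        · exact hdisj _ _ (fun h => hij (congrArg Fin.succ h)) e hei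
    · have hpos : 0 < ∑ v with v ∈ S, G.netOut f v := by
        refine sum_pos' (fun v hv => ?_) ⟨x, by simpa using hxS rfl, hx⟩
        simp only [mem_filter, mem_univ, true_and] at hv
        by_cases hvX : v ∈ X
        · exact hf.netOut_nonneg v hvX
        · exact (hf.netOut_eq_zero v hvX (Set.disjoint_left.mp hSY hv)).ge
      rw [sum_netOut_eq] at hpos
      exact absurd (sum_mul_crossSign_nonpos hf.abs_le_one hS) (not_le.mpr hpos)

/-- Menger's theorem, edge version. -/
theorem connectorBetween_of_le_delta (hXY : Disjoint X Y) {m : ℕ}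
    (hcut : ∀ S, X ⊆ S → Disjoint S Y → m ≤ G.delta S) : G.ConnectorBetween X Y m := by
  obtain ⟨f, hf, hm⟩ := G.exists_isUnitFlow_le_flowValue hXY m hcut
  obtain ⟨W, hW, hdisj⟩ := G.exists_paths_of_isUnitFlow hXY m f hf hm
  exact ⟨fun i => (W i).1, fun i => (W i).2.1, fun i => (W i).2.2, fun i => (hW i).1,
    fun i => (hW i).2.1, fun i => (hW i).2.2.1, hdisj⟩

end Flows

lemma delta_le_cwOrd (ρ : G.V → ℕ) (v : G.V) : G.delta {u | ρ u ≤ ρ v} ≤ G.cwOrd ρ :=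
  le_csSup ((Set.finite_range fun v => G.delta {u | ρ u ≤ ρ v}).subset
    (by rintro _ ⟨v, rfl⟩; exact ⟨v, rfl⟩)).bddAbove ⟨v, rfl⟩

lemma cwOrd_le {ρ : G.V → ℕ} {k : ℕ} (h : ∀ v, G.delta {u | ρ u ≤ ρ v} ≤ k) :
    G.cwOrd ρ ≤ k :=
  csSup_le' fun _ ⟨v, hv⟩ => hv ▸ h v

lemma cwOrd_le_cwOrd {ρ σ : G.V → ℕ}
    (h : ∀ v, G.delta {u | σ u ≤ σ v} ≤ G.delta {u | ρ u ≤ ρ v}) :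
    G.cwOrd σ ≤ G.cwOrd ρ :=
  cwOrd_le fun v => (h v).trans (G.delta_le_cwOrd ρ v)

lemma cutwidth_le_cwOrd {ρ : G.V → ℕ} (hρ : Function.Injective ρ) :
    G.cutwidth ≤ G.cwOrd ρ :=
  Nat.sInf_le ⟨ρ, hρ, rfl⟩

lemma exists_cwOrd_eq_cutwidth (G : Multigraph) :
    ∃ ρ : G.V → ℕ, Function.Injective ρ ∧ G.cwOrd ρ = G.cutwidth :=
  Nat.sInf_mem (s := {w | ∃ ρ : G.V → ℕ, Function.Injective ρ ∧ G.cwOrd ρ = w})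
    ⟨_, fun v => Fintype.equivFin G.V v, Fin.val_injective.comp (Equiv.injective _), rfl⟩

lemma delta_inter_le_of_isMinOn {L R S T : Set G.V} (hS : S ∈ Set.Icc L R)
    (hmin : IsMinOn G.delta (Set.Icc L R) S) (hTR : T ⊆ R) :
    G.delta (S ∩ T) ≤ G.delta T := by
  have := delta_inter_add_delta_union_le S T
  have := isMinOn_iff.mp hmin (S ∪ T)
    ⟨hS.1.trans Set.subset_union_left, Set.union_subset hS.2 hTR⟩
  omega

lemma delta_union_le_of_isMinOn {L R S T : Set G.V} (hS : S ∈ Set.Icc L R)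
    (hmin : IsMinOn G.delta (Set.Icc L R) S) (hLT : L ⊆ T) :
    G.delta (S ∪ T) ≤ G.delta T := by
  have := delta_inter_add_delta_union_le S T
  have := isMinOn_iff.mp hmin (S ∩ T)
    ⟨Set.subset_inter hS.1 hLT, Set.inter_subset_left.trans hS.2⟩
  omega

end Multigraph

section FrontRank

open scoped Classical

variable {α : Type*} [Fintype α]

/-- The ranking that lists `S` first and then its complement, each in the order of `ρ`. -/
noncomputable def frontRank (S : Set α) (ρ : α → ℕ) (a : α) : ℕ :=
  if a ∈ S then ρ a else ρ a + (Finset.univ.sup ρ + 1)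

variable {S : Set α} {ρ : α → ℕ}

lemma frontRank_injective (hρ : Function.Injective ρ) : Function.Injective (frontRank S ρ) := by
  intro a b hab
  have ha := Finset.le_sup (f := ρ) (Finset.mem_univ a)
  have hb := Finset.le_sup (f := ρ) (Finset.mem_univ b)
  apply hρ
  unfold frontRank at hab
  split_ifs at hab <;> omega

lemma setOf_frontRank_le_of_mem {a : α} (ha : a ∈ S) :
    {b | frontRank S ρ b ≤ frontRank S ρ a} = S ∩ {b | ρ b ≤ ρ a} := by
  ext b
  have ha' := Finset.le_sup (f := ρ) (Finset.mem_univ a)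
  by_cases hbS : b ∈ S <;> simp [frontRank, ha, hbS]
  omega

lemma setOf_frontRank_le_of_notMem {a : α} (ha : a ∉ S) :
    {b | frontRank S ρ b ≤ frontRank S ρ a} = S ∪ {b | ρ b ≤ ρ a} := by
  ext b
  have hb := Finset.le_sup (f := ρ) (Finset.mem_univ b)
  by_cases hbS : b ∈ S <;> simp [frontRank, ha, hbS]
  omega

lemma exists_setOf_frontRank_le_eq (hS : S.Nonempty) :
    ∃ a ∈ S, (∀ b ∈ S, ρ b ≤ ρ a) ∧
      {b | frontRank S ρ b ≤ frontRank S ρ a} = S := by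
  obtain ⟨b, hb⟩ := hS
  obtain ⟨a, haS, hmax⟩ := Finset.exists_max_image {b | b ∈ S} ρ ⟨b, by simpa using hb⟩
  simp only [Finset.mem_filter, Finset.mem_univ, true_and] at haS hmax
  have hSa : S ⊆ {b | ρ b ≤ ρ a} := hmax
  exact ⟨a, haS, hmax, by rw [setOf_frontRank_le_of_mem haS, Set.inter_eq_left.mpr hSa]⟩

end FrontRank

namespace Multigraph

open scoped Classical

variable {G : Multigraph}

noncomputable def cutSum (G : Multigraph) (ρ : G.V → ℕ) : ℕ :=
  ∑ v, G.delta {u | ρ u ≤ ρ v}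

lemma delta_setOf_frontRank_le {ρ : G.V → ℕ} {u u' : G.V} {S : Set G.V}
    (hS : S ∈ Set.Icc {z | ρ z ≤ ρ u} {z | ρ z ≤ ρ u'})
    (hmin : IsMinOn G.delta (Set.Icc {z | ρ z ≤ ρ u} {z | ρ z ≤ ρ u'}) S) (v : G.V) :
    G.delta {w | frontRank S ρ w ≤ frontRank S ρ v} ≤ G.delta {w | ρ w ≤ ρ v} := by
  by_cases hv : v ∈ S
  · rw [setOf_frontRank_le_of_mem hv]
    exact delta_inter_le_of_isMinOn hS hmin fun w (hw : ρ w ≤ ρ v) => hw.trans (hS.2 hv)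
  · rw [setOf_frontRank_le_of_notMem hv]
    refine delta_union_le_of_isMinOn hS hmin fun w (hw : ρ w ≤ ρ u) => hw.trans ?_
    exact (lt_of_not_ge fun h => hv (hS.1 h)).le

theorem linked_of_minimalFor_cutSum {ρ : G.V → ℕ}
    (hρ : MinimalFor (fun σ => Function.Injective σ ∧ G.cwOrd σ = G.cutwidth) G.cutSum ρ) :
    G.Linked ρ := by
  obtain ⟨⟨hinj, hopt⟩, hmin⟩ := hρ
  intro u u' huu'
  set L := {z | ρ z ≤ ρ u}
  set R := {z | ρ z ≤ ρ u'}
  have hLR : L ⊆ R := fun z (hz : ρ z ≤ ρ u) => hz.trans huu'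
  refine G.connectorBetween_of_le_delta (Set.disjoint_compl_right_iff_subset.mpr hLR)
    fun T hLT hTR => ?_
  obtain ⟨S, hS, hSmin⟩ := Set.exists_min_image (Set.Icc L R) G.delta (Set.toFinite _)
    ⟨L, Set.left_mem_Icc.mpr hLR⟩
  refine le_trans ?_ (hSmin T ⟨hLT, Set.disjoint_compl_right_iff_subset.mp hTR⟩)
  by_contra! hlt
  have hle := G.delta_setOf_frontRank_le hS (isMinOn_iff.mpr hSmin)
  have huS : u ∈ S := hS.1 (le_refl (ρ u))
  obtain ⟨v, hvS, hvmax, hv⟩ := exists_setOf_frontRank_le_eq (ρ := ρ) ⟨u, huS⟩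
  have hlast :
      G.delta {w | frontRank S ρ w ≤ frontRank S ρ v} < G.delta {w | ρ w ≤ ρ v} := by
    rw [hv]
    exact hlt.trans_le (Nat.sInf_le ⟨v, hvmax u huS, hS.2 hvS, rfl⟩)
  have hσ : Function.Injective (frontRank S ρ) ∧ G.cwOrd (frontRank S ρ) = G.cutwidth :=
    ⟨frontRank_injective hinj, ((G.cwOrd_le_cwOrd hle).trans hopt.le).antisymm
      (G.cutwidth_le_cwOrd (frontRank_injective hinj))⟩
  have hdrop : G.cutSum (frontRank S ρ) < G.cutSum ρ :=
    Finset.sum_lt_sum (fun w _ => hle w) ⟨v, Finset.mem_univ v, hlast⟩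
  exact hdrop.not_ge (hmin hσ hdrop.le)

end Multigraph

open Multigraph in
/-- every multigraph admits a linked ordering of optimum width. -/
theorem exists_linked_optimum_ordering (G : Multigraph) :
    ∃ ρ : G.V → ℕ, Function.Injective ρ ∧ G.cwOrd ρ = G.cutwidth ∧ G.Linked ρ := by
  obtain ⟨ρ₀, hρ₀⟩ := G.exists_cwOrd_eq_cutwidth
  obtain ⟨ρ, hρ⟩ := exists_minimalFor_of_wellFoundedLT
    (fun σ => Function.Injective σ ∧ G.cwOrd σ = G.cutwidth) G.cutSum ⟨ρ₀, hρ₀⟩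
  exact ⟨ρ, hρ.1.1, hρ.1.2, G.linked_of_minimalFor_cutSum hρ⟩
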